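/- arXiv:2605.23336 — 3 statements merged into one kernel-verified Lean document; each statement's English description precedes it below -/
import Mathlib

section
/- For every non-constant Boolean function f on n variables and every constant 0 < ε < 1, the maximum of the ε-approximate non-deterministic degrees of f and its complement is at least half the sign degree (threshold degree) of f: max{N_ε(f), N_ε(¬f)} ≥ deg_±(f)/2. -/
open MvPolynomial

noncomputable section

/-- Real value of a Boolean. -/
def bval (b : Bool) : ℝ := if b then 1 else 0

/-- Evaluate a real multivariate polynomial at a Boolean point. -/
def evalB {ι : Type*} (p : MvPolynomial ι ℝ) (x : ι → Bool) : ℝ :=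
  MvPolynomial.eval (fun i => bval (x i)) p

/-- `p` is an `ε`-approximate non-deterministic polynomial for `f`. -/
def IsApproxNdet {ι : Type*} (ε : ℝ) (f : (ι → Bool) → Bool)
    (p : MvPolynomial ι ℝ) : Prop :=
  ∀ x, (f x = false → |evalB p x| ≤ ε) ∧ (f x = true → 1 ≤ |evalB p x|)

/-- The `ε`-approximate non-deterministic degree `N_ε(f)`. -/
def approxNdeg {ι : Type*} (ε : ℝ) (f : (ι → Bool) → Bool) : ℕ :=
  sInf {d | ∃ p : MvPolynomial ι ℝ, IsApproxNdet ε f p ∧ p.totalDegree ≤ d}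

/-- `N(f) = N_{1/3}(f)`. -/
def N13 {ι : Type*} (f : (ι → Bool) → Bool) : ℕ := approxNdeg (1/3) f

/-- `M(f) = max{N(f), N(¬f)}`. -/
def M13 {ι : Type*} (f : (ι → Bool) → Bool) : ℕ :=
  max (N13 f) (N13 fun x => !(f x))

/-- `p` sign-represents `f`. -/
def SignRep {ι : Type*} (p : MvPolynomial ι ℝ) (f : (ι → Bool) → Bool) : Prop :=
  ∀ x, evalB p x < 0 ↔ f x = true

/-- Sign degree (threshold degree). -/
def signDeg {ι : Type*} (f : (ι → Bool) → Bool) : ℕ :=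
  sInf {d | ∃ p : MvPolynomial ι ℝ, SignRep p f ∧ p.totalDegree ≤ d}

/-- `1/3`-approximate degree. -/
def approxDeg {ι : Type*} (f : (ι → Bool) → Bool) : ℕ :=
  sInf {d | ∃ p : MvPolynomial ι ℝ,
    (∀ x, |evalB p x - bval (f x)| ≤ 1/3) ∧ p.totalDegree ≤ d}

/-- Exact degree of a Boolean function. -/
def degB {ι : Type*} (f : (ι → Bool) → Bool) : ℕ :=
  sInf {d | ∃ p : MvPolynomial ι ℝ,
    (∀ x, evalB p x = bval (f x)) ∧ p.totalDegree ≤ d}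

/-- Hamming weight. -/
def wt {ι : Type*} [Fintype ι] (x : ι → Bool) : ℕ :=
  (Finset.univ.filter fun i => x i = true).card

/-- Flip the bits of `x` inside the block `B`. -/
def flipB {ι : Type*} [DecidableEq ι] (x : ι → Bool) (B : Finset ι) : ι → Bool :=
  fun i => if i ∈ B then !(x i) else x i

/-- Sensitivity of `f` at `x`. -/
def sensAt {ι : Type*} [Fintype ι] [DecidableEq ι]
    (f : (ι → Bool) → Bool) (x : ι → Bool) : ℕ :=
  (Finset.univ.filter fun i : ι => f (flipB x {i}) ≠ f x).card

/-- Sensitivity of `f`. -/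
def sens {ι : Type*} [Fintype ι] [DecidableEq ι] (f : (ι → Bool) → Bool) : ℕ :=
  sSup {s | ∃ x, sensAt f x = s}

/-- 0-sensitivity. -/
def sens₀ {ι : Type*} [Fintype ι] [DecidableEq ι] (f : (ι → Bool) → Bool) : ℕ :=
  sSup {s | ∃ x, f x = false ∧ sensAt f x = s}

/-- 1-sensitivity. -/
def sens₁ {ι : Type*} [Fintype ι] [DecidableEq ι] (f : (ι → Bool) → Bool) : ℕ :=
  sSup {s | ∃ x, f x = true ∧ sensAt f x = s}

/-- Block sensitivity of `f`. -/
def blockSens {ι : Type*} [Fintype ι] [DecidableEq ι] (f : (ι → Bool) → Bool) : ℕ :=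
  sSup {k | ∃ x, ∃ B : Fin k → Finset ι,
    (∀ i j, i ≠ j → Disjoint (B i) (B j)) ∧ ∀ i, f (flipB x (B i)) ≠ f x}

/-- `S` is a certificate for `f` at `x`. -/
def IsCert {ι : Type*} (f : (ι → Bool) → Bool) (x : ι → Bool) (S : Finset ι) : Prop :=
  ∀ y, (∀ i ∈ S, y i = x i) → f y = f x

/-- Certificate complexity at `x`. -/
def certAt {ι : Type*} (f : (ι → Bool) → Bool) (x : ι → Bool) : ℕ :=
  sInf {c | ∃ S : Finset ι, IsCert f x S ∧ S.card ≤ c}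

/-- Certificate complexity of `f`. -/
def cert {ι : Type*} (f : (ι → Bool) → Bool) : ℕ :=
  sSup {c | ∃ x, certAt f x = c}

/-- Deterministic decision trees querying variables indexed by `ι`. -/
inductive DTree (ι : Type*) where
  | leaf : Bool → DTree ι
  | node : ι → DTree ι → DTree ι → DTree ι

def DTree.evalT {ι : Type*} : DTree ι → (ι → Bool) → Bool
  | .leaf b, _ => b
  | .node i t0 t1, x => if x i then t1.evalT x else t0.evalT x

def DTree.depth {ι : Type*} : DTree ι → ℕ
  | .leaf _ => 0
  | .node _ t0 t1 => 1 + max t0.depth t1.depth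

/-- Deterministic query complexity `D(f)`. -/
def Dquery {ι : Type*} (f : (ι → Bool) → Bool) : ℕ :=
  sInf {d | ∃ t : DTree ι, (∀ x, t.evalT x = f x) ∧ t.depth ≤ d}

/-- `P` is a monotone path from `0^n` to `1^n`. -/
def IsMonoPath {ι : Type*} [Fintype ι] [DecidableEq ι] (P : ℕ → ι → Bool) : Prop :=
  P 0 = (fun _ => false) ∧ P (Fintype.card ι) = (fun _ => true) ∧
  ∀ t < Fintype.card ι, ∃ j, P t j = false ∧ P (t + 1) = Function.update (P t) j true

/-- Alternation number of `f` along the path `P`. -/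
def pathAlt {ι : Type*} [Fintype ι] (f : (ι → Bool) → Bool) (P : ℕ → ι → Bool) : ℕ :=
  ((Finset.range (Fintype.card ι)).filter fun t => f (P t) ≠ f (P (t + 1))).card

/-- Alternation number of `f`. -/
def altNum {ι : Type*} [Fintype ι] [DecidableEq ι] (f : (ι → Bool) → Bool) : ℕ :=
  sSup {a | ∃ P, IsMonoPath P ∧ pathAlt f P = a}

/-- Zebra function: all monotone paths have the same alternation number. -/
def IsZebra {ι : Type*} [Fintype ι] [DecidableEq ι] (f : (ι → Bool) → Bool) : Prop :=
  ∀ P Q, IsMonoPath P → IsMonoPath Q → pathAlt f P = pathAlt f Q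

/-- Symmetric Boolean function. -/
def IsSymmF {ι : Type*} [Fintype ι] (f : (ι → Bool) → Bool) : Prop :=
  ∀ x y, wt x = wt y → f x = f y

/-- Monotonically increasing. -/
def MonoIncr {ι : Type*} (f : (ι → Bool) → Bool) : Prop :=
  ∀ x y : ι → Bool, (∀ i, x i = true → y i = true) → f x = true → f y = true

/-- Monotonically decreasing. -/
def MonoDecr {ι : Type*} (f : (ι → Bool) → Bool) : Prop :=
  ∀ x y : ι → Bool, (∀ i, x i = true → y i = true) → f y = true → f x = true

/-- Monotone (increasing or decreasing). -/
def Monot {ι : Type*} (f : (ι → Bool) → Bool) : Prop := MonoIncr f ∨ MonoDecr f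

/-- Non-constant. -/
def NonConst {ι : Type*} (f : (ι → Bool) → Bool) : Prop := ∃ x y, f x ≠ f y

end

noncomputable section Aux

/-- Indicator polynomial for the point `a`. -/
def chiP {n : ℕ} (a : Fin n → Bool) : MvPolynomial (Fin n) ℝ :=
  ∏ i, (if a i then MvPolynomial.X i else 1 - MvPolynomial.X i)

lemma chiP_eval {n : ℕ} (a x : Fin n → Bool) :
    evalB (chiP a) x = if x = a then 1 else 0 := by
  classical
  unfold evalB chiP
  rw [map_prod]
  by_cases h : x = a
  · subst h
    rw [if_pos rfl]
    apply Finset.prod_eq_one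
    intro i _
    by_cases hi : x i <;> simp [hi, bval]
  · rw [if_neg h]
    obtain ⟨i, hi⟩ : ∃ i, x i ≠ a i := by
      by_contra hc
      push_neg at hc
      exact h (funext hc)
    apply Finset.prod_eq_zero (Finset.mem_univ i)
    by_cases ha : a i
    · have : x i = false := by
        cases hxi : x i
        · rfl
        · exact absurd (hxi.trans ha.symm) hi
      simp [ha, this, bval]
    · have hb : a i = false := by simpa using ha
      have : x i = true := by
        cases hxi : x i
        · exact absurd (hxi.trans hb.symm) hi
        · rfl
      simp [ha, this, bval]

lemma chiP_degree {n : ℕ} (a : Fin n → Bool) : (chiP a).totalDegree ≤ n := by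
  classical
  unfold chiP
  calc (∏ i, (if a i then MvPolynomial.X i else 1 - MvPolynomial.X (R := ℝ) i)).totalDegree
      ≤ ∑ i : Fin n, (if a i then MvPolynomial.X i else 1 - MvPolynomial.X (R := ℝ) i).totalDegree :=
        MvPolynomial.totalDegree_finset_prod _ _
    _ ≤ ∑ _i : Fin n, 1 := by
        apply Finset.sum_le_sum
        intro i _
        by_cases hi : a i
        · simp [hi, MvPolynomial.totalDegree_X]
        · simp only [hi, if_false]
          calc (1 - MvPolynomial.X (R := ℝ) i).totalDegree
              ≤ max (1 : MvPolynomial (Fin n) ℝ).totalDegree (MvPolynomial.X i).totalDegree :=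
                MvPolynomial.totalDegree_sub _ _
            _ ≤ 1 := by simp [MvPolynomial.totalDegree_X]
    _ = n := by simp

lemma ndet_set_nonempty {n : ℕ} (ε : ℝ) (hε : 0 ≤ ε) (g : (Fin n → Bool) → Bool) :
    {d | ∃ p : MvPolynomial (Fin n) ℝ, IsApproxNdet ε g p ∧ p.totalDegree ≤ d}.Nonempty := by
  classical
  refine ⟨n, ∑ a ∈ Finset.univ.filter (fun a => g a = true), chiP a, ?_, ?_⟩
  · intro x
    have hev : evalB (∑ a ∈ Finset.univ.filter (fun a => g a = true), chiP a) x
        = bval (g x) := by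
      unfold evalB
      rw [map_sum]
      have : ∀ a ∈ Finset.univ.filter (fun a => g a = true),
          MvPolynomial.eval (fun i => bval (x i)) (chiP a) = if x = a then 1 else 0 :=
        fun a _ => chiP_eval a x
      rw [Finset.sum_congr rfl this]
      rw [Finset.sum_ite_eq (Finset.univ.filter (fun a => g a = true)) x (fun _ => (1:ℝ))]
      by_cases hx : g x = true <;> simp [hx, bval]
    constructor
    · intro hx
      rw [hev, hx]
      simpa [bval] using hε
    · intro hx
      rw [hev, hx]
      simp [bval]
  · exact MvPolynomial.totalDegree_finset_sum _ _ |>.trans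
      (Finset.sup_le fun a _ => chiP_degree a)

end Aux

/-- `max{N_ε(f), N_ε(¬f)} ≥ deg_±(f)/2` for non-constant `f`. -/
theorem stmt0 {n : ℕ} (f : (Fin n → Bool) → Bool) (hf : NonConst f)
    (ε : ℝ) (hε0 : 0 < ε) (hε1 : ε < 1) :
    signDeg f ≤ 2 * max (approxNdeg ε f) (approxNdeg ε fun x => !(f x)) := by
  classical
  obtain ⟨p, hp, hpd⟩ := Nat.sInf_mem (ndet_set_nonempty ε hε0.le f)
  obtain ⟨q, hq, hqd⟩ := Nat.sInf_mem (ndet_set_nonempty ε hε0.le (fun x => !(f x)))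
  apply Nat.sInf_le
  refine ⟨q * q - p * p, ?_, ?_⟩
  · intro x
    set P := evalB p x with hP
    set Q := evalB q x with hQ
    have hev : evalB (q * q - p * p) x = Q * Q - P * P := by
      simp [evalB, hP, hQ]
    rw [hev]
    cases hx : f x
    · have h1 : |P| ≤ ε := (hp x).1 hx
      have h2 : 1 ≤ |Q| := (hq x).2 (by simp [hx])
      constructor
      · intro hlt
        exfalso
        nlinarith [abs_nonneg P, abs_nonneg Q, sq_abs P, sq_abs Q]
      · intro h; exact absurd h (by simp)
    · have h1 : 1 ≤ |P| := (hp x).2 hx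
      have h2 : |Q| ≤ ε := (hq x).1 (by simp [hx])
      constructor
      · intro _; rfl
      · intro _
        nlinarith [abs_nonneg P, abs_nonneg Q, sq_abs P, sq_abs Q]
  · calc (q * q - p * p).totalDegree
        ≤ max (q * q).totalDegree (p * p).totalDegree :=
          MvPolynomial.totalDegree_sub _ _
      _ ≤ max (q.totalDegree + q.totalDegree) (p.totalDegree + p.totalDegree) :=
          max_le_max (MvPolynomial.totalDegree_mul _ _) (MvPolynomial.totalDegree_mul _ _)
      _ ≤ 2 * max (approxNdeg ε f) (approxNdeg ε fun x => !(f x)) := by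
          have h1 : p.totalDegree ≤ approxNdeg ε f := hpd
          have h2 : q.totalDegree ≤ approxNdeg ε fun x => !(f x) := hqd
          have h3 : approxNdeg ε f ≤ max (approxNdeg ε f) (approxNdeg ε fun x => !(f x)) :=
            le_max_left _ _
          have h4 : (approxNdeg ε fun x => !(f x)) ≤
              max (approxNdeg ε f) (approxNdeg ε fun x => !(f x)) := le_max_right _ _
          omega
end

section
/- For every Boolean function f : {0,1}^n → {0,1} and constant 0 < ε < 1, the ε-approximate rational degree of f is at most twice the maximum of the ε-approximate non-deterministic degrees of f and ¬f: rdeg_ε(f) ≤ 2·max{N_ε(f), N_ε(¬f)}. Concretely, if p, q are ε-approximate non-deterministic polynomials for f, ¬f respectively, then |p(x)^2/(p(x)^2 + q(x)^2) − f(x)| ≤ ε for all x ∈ {0,1}^n. -/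
open MvPolynomial

/-- `ε`-approximate rational degree. -/
noncomputable def ratApproxDeg {ι : Type*} (ε : ℝ) (f : (ι → Bool) → Bool) : ℕ :=
  sInf {d | ∃ p q : MvPolynomial ι ℝ, (∀ x, evalB q x ≠ 0) ∧
    (∀ x, |bval (f x) - evalB p x / evalB q x| ≤ ε) ∧
    p.totalDegree ≤ d ∧ q.totalDegree ≤ d}

/-!
At a point of `f⁻¹(1)` we have `p² ≥ 1` and `q² ≤ ε²`, so `p²/(p² + q²)` is within
`min(1, ε²) ≤ ε` of `1`; on `f⁻¹(0)` the roles of `p` and `q` swap. Since one of `|p|`, `|q|`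
is at least `1` everywhere, `p² + q²` never vanishes, and both numerator and denominator
have degree at most `2·max(deg p, deg q)`.
-/

lemma sq_div_sq_add_sq_le {a b ε : ℝ} (ha : |a| ≤ ε) (hb : 1 ≤ |b|) :
    a ^ 2 / (a ^ 2 + b ^ 2) ≤ ε := by
  have hε : 0 ≤ ε := (abs_nonneg a).trans ha
  have ha2 : a ^ 2 ≤ ε ^ 2 := sq_le_sq' (abs_le.mp ha).1 (abs_le.mp ha).2
  have hb2 : 1 ≤ b ^ 2 := by nlinarith [sq_abs b]
  rw [div_le_iff₀ (by positivity)]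
  rcases le_total ε 1 with hε1 | hε1
  · nlinarith [sq_nonneg a]
  · nlinarith [sq_nonneg b]

section ApproxNdet

variable {ι : Type*} {ε : ℝ} {f : (ι → Bool) → Bool} {p q : MvPolynomial ι ℝ}

lemma evalB_sq_add_sq_pos (hp : IsApproxNdet ε f p) (hq : IsApproxNdet ε (fun x => !(f x)) q)
    (x : ι → Bool) : 0 < evalB p x ^ 2 + evalB q x ^ 2 := by
  cases hf : f x
  · have := (hq x).2 (by simp [hf])
    nlinarith [sq_abs (evalB q x), sq_nonneg (evalB p x)]
  · have := (hp x).2 hf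
    nlinarith [sq_abs (evalB p x), sq_nonneg (evalB q x)]

lemma abs_evalB_sq_div_sub_bval_le (hp : IsApproxNdet ε f p)
    (hq : IsApproxNdet ε (fun x => !(f x)) q) (x : ι → Bool) :
    |evalB p x ^ 2 / (evalB p x ^ 2 + evalB q x ^ 2) - bval (f x)| ≤ ε := by
  have hpos := evalB_sq_add_sq_pos hp hq x
  cases hf : f x
  · rw [bval, if_neg Bool.false_ne_true, sub_zero, abs_of_nonneg (by positivity)]
    exact sq_div_sq_add_sq_le ((hp x).1 hf) ((hq x).2 (by simp [hf]))
  · rw [bval, if_pos rfl, div_sub_one hpos.ne', sub_add_cancel_left, neg_div, abs_neg,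
      abs_of_nonneg (by positivity), add_comm]
    exact sq_div_sq_add_sq_le ((hq x).1 (by simp [hf])) ((hp x).2 hf)

lemma ratApproxDeg_le_two_mul_max (hp : IsApproxNdet ε f p)
    (hq : IsApproxNdet ε (fun x => !(f x)) q) :
    ratApproxDeg ε f ≤ 2 * max p.totalDegree q.totalDegree := by
  have hevalB_sq : ∀ (r : MvPolynomial ι ℝ) x, evalB (r ^ 2) x = evalB r x ^ 2 :=
    fun r x => map_pow _ r 2
  have hevalB_add : ∀ (r s : MvPolynomial ι ℝ) x, evalB (r + s) x = evalB r x + evalB s x :=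
    fun r s x => map_add _ r s
  have hp_deg : (p ^ 2).totalDegree ≤ 2 * max p.totalDegree q.totalDegree :=
    (totalDegree_pow p 2).trans (Nat.mul_le_mul_left 2 (le_max_left _ _))
  have hq_deg : (q ^ 2).totalDegree ≤ 2 * max p.totalDegree q.totalDegree :=
    (totalDegree_pow q 2).trans (Nat.mul_le_mul_left 2 (le_max_right _ _))
  refine Nat.sInf_le ⟨p ^ 2, p ^ 2 + q ^ 2, fun x => ?_, fun x => ?_, hp_deg,
    (totalDegree_add _ _).trans (max_le hp_deg hq_deg)⟩
  · rw [hevalB_add, hevalB_sq, hevalB_sq]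
    exact (evalB_sq_add_sq_pos hp hq x).ne'
  · rw [hevalB_add, hevalB_sq, hevalB_sq, abs_sub_comm]
    exact abs_evalB_sq_div_sub_bval_le hp hq x

end ApproxNdet

section Interpolation

variable {ι : Type*} [Fintype ι]

noncomputable def pointIndicator (y : ι → Bool) : MvPolynomial ι ℝ :=
  ∏ i, if y i then X i else 1 - X i

lemma evalB_pointIndicator [DecidableEq ι] (y x : ι → Bool) :
    evalB (pointIndicator y) x = if y = x then 1 else 0 := by
  have hfactor : ∀ i, eval (fun i => bval (x i)) (if y i then X i else 1 - X i)
      = if y i = x i then 1 else 0 := by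
    intro i
    cases y i <;> cases hx : x i <;> simp [bval, hx]
  rw [evalB, pointIndicator, map_prod]
  simp only [hfactor, Finset.prod_boole, Finset.mem_univ, true_implies, _root_.funext_iff]

lemma exists_evalB_eq_bval (f : (ι → Bool) → Bool) :
    ∃ p : MvPolynomial ι ℝ, ∀ x, evalB p x = bval (f x) := by
  classical
  refine ⟨∑ y, C (bval (f y)) * pointIndicator y, fun x => ?_⟩
  have hsum : evalB (∑ y, C (bval (f y)) * pointIndicator y) x
      = ∑ y, bval (f y) * evalB (pointIndicator y) x := by
    simp only [evalB, map_sum, map_mul, eval_C]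
  simp only [hsum, evalB_pointIndicator, mul_ite, mul_one, mul_zero, Finset.sum_ite_eq',
    Finset.mem_univ, if_true]

lemma exists_isApproxNdet_totalDegree_le {ε : ℝ} (hε : 0 ≤ ε) (f : (ι → Bool) → Bool) :
    ∃ p : MvPolynomial ι ℝ, IsApproxNdet ε f p ∧ p.totalDegree ≤ approxNdeg ε f := by
  obtain ⟨p, hp⟩ := exists_evalB_eq_bval f
  have hexact : IsApproxNdet ε f p := fun x =>
    ⟨fun h => by simp [hp x, h, bval, hε], fun h => by simp [hp x, h, bval]⟩
  exact Nat.sInf_mem (s := {d | ∃ p : MvPolynomial ι ℝ, IsApproxNdet ε f p ∧ p.totalDegree ≤ d})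
    ⟨_, p, hexact, le_rfl⟩

end Interpolation

theorem stmt3_general {n : ℕ} (ε : ℝ) (hε0 : 0 < ε)
    (f : (Fin n → Bool) → Bool) :
    ratApproxDeg ε f ≤ 2 * max (approxNdeg ε f) (approxNdeg ε fun x => !(f x)) ∧
    ∀ p q : MvPolynomial (Fin n) ℝ, IsApproxNdet ε f p →
      IsApproxNdet ε (fun x => !(f x)) q →
      ∀ x, |evalB p x ^ 2 / (evalB p x ^ 2 + evalB q x ^ 2) - bval (f x)| ≤ ε := by
  refine ⟨?_, fun p q hp hq => abs_evalB_sq_div_sub_bval_le hp hq⟩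
  obtain ⟨p, hp, hp_deg⟩ := exists_isApproxNdet_totalDegree_le hε0.le f
  obtain ⟨q, hq, hq_deg⟩ := exists_isApproxNdet_totalDegree_le hε0.le fun x => !(f x)
  exact (ratApproxDeg_le_two_mul_max hp hq).trans
    (Nat.mul_le_mul_left 2 (max_le_max hp_deg hq_deg))

/-- `rdeg_ε(f) ≤ 2·max{N_ε(f), N_ε(¬f)}`, via `p²/(p²+q²)`. -/
theorem stmt3 {n : ℕ} (ε : ℝ) (hε0 : 0 < ε) (hε1 : ε < 1)
    (f : (Fin n → Bool) → Bool) :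
    ratApproxDeg ε f ≤ 2 * max (approxNdeg ε f) (approxNdeg ε fun x => !(f x)) ∧
    ∀ p q : MvPolynomial (Fin n) ℝ, IsApproxNdet ε f p →
      IsApproxNdet ε (fun x => !(f x)) q →
      ∀ x, |evalB p x ^ 2 / (evalB p x ^ 2 + evalB q x ^ 2) - bval (f x)| ≤ ε :=
  stmt3_general ε hε0 f
end

section
/- The 1/3-approximate non-deterministic degree of the n-bit NOR function is at least √(n/8). More generally, N(NOR_n) = Θ(√n). -/
open MvPolynomial

/-- The `n`-bit NOR function. -/
def NOR (n : ℕ) : (Fin n → Bool) → Bool := fun x => decide (∀ i, x i = false)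

/-!
Lower bound: averaging an approximating polynomial for `NOR_n` over the inputs of each Hamming
weight (Minsky–Papert symmetrization) gives a univariate `q` of no larger degree `d` with
`|q 0| ≥ 1` and `|q k| ≤ 1/3` for `k = 1, …, n`; say `q 0 ≥ 1`. With `D = max |q'|` on `[0, n]`,
the drop from `q 0` to `q 1` gives `D ≥ q 0 - 1/3`, and comparing with the nearest integer gives
`|q| ≤ q 0 + D/2` on `[0, n]`. Markov's inequality `D ≤ 4 d² max |q| / n` then forces `n ≤ 8 d²`.

Upper bound: `(1/3) T_d((n + 1 - 2t) / n)` with `d = ⌊√(2n)⌋ + 1` is at most `1/3` in absolute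
value on `t = 1, …, n` and at least `1` at `t = 0`; substitute `t = x₁ + ⋯ + xₙ`.
-/

namespace Polynomial

open Set

theorem abs_derivative_eval_one_le_of_abs_le_one {P : ℝ[X]} {d : ℕ} (hdeg : P.degree ≤ d)
    (hP : ∀ x ∈ Icc (-1 : ℝ) 1, |P.eval x| ≤ 1) :
    |(derivative P).eval 1| ≤ d ^ 2 := by
  have h₁ := Chebyshev.eval_iterate_derivative_le_of_forall_abs_le_one (k := 1) le_rfl hdeg hP
  have h₂ := Chebyshev.eval_iterate_derivative_le_of_forall_abs_le_one (k := 1) le_rfl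
    (P := -P) (by rwa [degree_neg]) (by simpa using hP)
  simp only [Function.iterate_one, Chebyshev.derivative_T_eval_one, derivative_neg,
    eval_neg] at h₁ h₂
  exact abs_le.mpr ⟨by push_cast at h₂; linarith, by exact_mod_cast h₁⟩

theorem abs_derivative_eval_one_le {P : ℝ[X]} {d : ℕ} {M : ℝ} (hdeg : P.natDegree ≤ d)
    (hP : ∀ x ∈ Icc (-1 : ℝ) 1, |P.eval x| ≤ M) :
    |(derivative P).eval 1| ≤ d ^ 2 * M := by
  have hM : 0 ≤ M := (abs_nonneg _).trans (hP 1 (by norm_num))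
  rcases hM.eq_or_lt with rfl | hM
  · have : P = 0 := eq_zero_of_infinite_isRoot P <|
      (Icc_infinite (by norm_num : (-1 : ℝ) < 1)).mono fun x hx => abs_nonpos_iff.mp (hP x hx)
    simp [this]
  have key := abs_derivative_eval_one_le_of_abs_le_one (P := C M⁻¹ * P) (d := d)
    ((degree_C_mul (inv_ne_zero hM.ne')).trans_le (degree_le_of_natDegree_le hdeg)) fun x hx => by
      rw [eval_mul, eval_C, abs_mul, abs_inv, abs_of_pos hM, inv_mul_le_iff₀ hM, mul_one]
      exact hP x hx
  rwa [derivative_C_mul, eval_mul, eval_C, abs_mul, abs_inv, abs_of_pos hM, inv_mul_le_iff₀ hM,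
    mul_comm] at key

theorem abs_derivative_eval_add_le {P : ℝ[X]} {d : ℕ} {M c r : ℝ} (hr : r ≠ 0)
    (hdeg : P.natDegree ≤ d) (hP : ∀ x ∈ Icc (c - |r|) (c + |r|), |P.eval x| ≤ M) :
    |(derivative P).eval (c + r)| ≤ d ^ 2 * M / |r| := by
  set Q := P.comp (C r * X + C c)
  have hQdeg : Q.natDegree ≤ d := by
    rwa [natDegree_comp, natDegree_linear hr, mul_one]
  have hQ : ∀ x ∈ Icc (-1 : ℝ) 1, |Q.eval x| ≤ M := by
    intro x hx
    have : |r * x| ≤ |r| := by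
      rw [abs_mul]
      exact mul_le_of_le_one_right (abs_nonneg r) (abs_le.mpr hx)
    simp only [Q, eval_comp, eval_add, eval_mul, eval_C, eval_X]
    exact hP _ ⟨by linarith [neg_abs_le (r * x)], by linarith [le_abs_self (r * x)]⟩
  have key := abs_derivative_eval_one_le hQdeg hQ
  rw [derivative_comp, eval_mul, eval_comp] at key
  simp only [derivative_add, derivative_mul, derivative_C, derivative_X, zero_mul, zero_add,
    mul_one, add_zero, eval_C, eval_add, eval_mul, eval_X, abs_mul] at key
  rw [le_div_iff₀ (abs_pos.mpr hr), add_comm c r]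
  linarith

theorem abs_derivative_eval_le_of_mem_Icc {P : ℝ[X]} {d : ℕ} {M a b x : ℝ}
    (hdeg : P.natDegree ≤ d) (hP : ∀ y ∈ Icc a b, |P.eval y| ≤ M) (hx : x ∈ Icc a b)
    (hab : a < b) : |(derivative P).eval x| ≤ 4 * d ^ 2 * M / (b - a) := by
  -- `x` is an endpoint of the longer of `[a, x]` and `[x, b]`, of half-length `≥ (b - a) / 4`.
  have hM : 0 ≤ M := (abs_nonneg _).trans (hP x hx)
  have key : ∀ c r, c + r = x → (b - a) / 4 ≤ |r| → a ≤ c - |r| → c + |r| ≤ b →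
      |(derivative P).eval x| ≤ 4 * d ^ 2 * M / (b - a) := by
    intro c r hcr hr hca hcb
    have hr0 : 0 < |r| := lt_of_lt_of_le (by linarith) hr
    calc |(derivative P).eval x| ≤ d ^ 2 * M / |r| := hcr ▸
          abs_derivative_eval_add_le (abs_pos.mp hr0) hdeg
            fun y hy => hP y ⟨hca.trans hy.1, hy.2.trans hcb⟩
      _ ≤ d ^ 2 * M / ((b - a) / 4) := by gcongr
      _ = 4 * d ^ 2 * M / (b - a) := by field_simp
  rcases le_or_gt x ((a + b) / 2) with h | h
  · refine key ((x + b) / 2) ((x - b) / 2) (by ring) ?_ ?_ ?_ <;>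
      rw [abs_of_nonpos (by linarith [hx.2])] <;> linarith [hx.1]
  · refine key ((a + x) / 2) ((x - a) / 2) (by ring) ?_ ?_ ?_ <;>
      rw [abs_of_nonneg (by linarith [hx.1])] <;> linarith [hx.2]

theorem abs_eval_sub_le_of_abs_derivative_le {P : ℝ[X]} {a b D x y : ℝ}
    (hD : ∀ z ∈ Icc a b, |(derivative P).eval z| ≤ D) (hx : x ∈ Icc a b) (hy : y ∈ Icc a b) :
    |P.eval y - P.eval x| ≤ D * |y - x| :=
  (convex_Icc a b).norm_image_sub_le_of_norm_deriv_le (fun _ _ => P.differentiableAt)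
    (fun z hz => by simpa only [Polynomial.deriv, Real.norm_eq_abs] using hD z hz) hx hy

theorem abs_eval_le_of_abs_eval_natCast_le {P : ℝ[X]} {n : ℕ} {B D x : ℝ}
    (hD : ∀ z ∈ Icc 0 (n : ℝ), |(derivative P).eval z| ≤ D)
    (hB : ∀ k : ℕ, k ≤ n → |P.eval (k : ℝ)| ≤ B) (hx : x ∈ Icc 0 (n : ℝ)) :
    |P.eval x| ≤ B + D / 2 := by
  set k := ⌊x + 1 / 2⌋₊
  have hk₁ : (k : ℝ) ≤ x + 1 / 2 := Nat.floor_le (by linarith [hx.1])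
  have hk₂ : x + 1 / 2 < k + 1 := Nat.lt_floor_add_one _
  have hkn : k ≤ n := by
    have : (k : ℝ) < n + 1 := by linarith [hx.2]
    exact_mod_cast Nat.lt_add_one_iff.mp (by exact_mod_cast this)
  have hk : (k : ℝ) ∈ Icc 0 (n : ℝ) := ⟨k.cast_nonneg, by exact_mod_cast hkn⟩
  have hD0 : 0 ≤ D := (abs_nonneg _).trans (hD x hx)
  calc |P.eval x| ≤ |P.eval (k : ℝ)| + |P.eval x - P.eval (k : ℝ)| := by
        simpa using abs_add_le (P.eval (k : ℝ)) (P.eval x - P.eval (k : ℝ))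
    _ ≤ B + D * |x - k| := add_le_add (hB k hkn) (abs_eval_sub_le_of_abs_derivative_le hD hk hx)
    _ ≤ B + D / 2 := by
        have : |x - k| ≤ 1 / 2 := abs_le.mpr ⟨by linarith, by linarith⟩
        nlinarith

theorem natCast_le_eight_mul_natDegree_sq {q : ℝ[X]} {n : ℕ} (h₀ : 1 ≤ q.eval 0)
    (hk : ∀ k : ℕ, 1 ≤ k → k ≤ n → |q.eval (k : ℝ)| ≤ 1 / 3) :
    (n : ℝ) ≤ 8 * q.natDegree ^ 2 := by
  rcases Nat.eq_zero_or_pos n with rfl | hn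
  · simp only [CharP.cast_eq_zero]; positivity
  have hnR : (1 : ℝ) ≤ n := by exact_mod_cast hn
  obtain ⟨ξ, hξ, hmax⟩ := (isCompact_Icc (a := (0 : ℝ)) (b := n)).exists_isMaxOn
    (nonempty_Icc.mpr (by positivity)) (continuous_abs.comp (derivative q).continuous).continuousOn
  set D := |(derivative q).eval ξ|
  have hD : ∀ z ∈ Icc 0 (n : ℝ), |(derivative q).eval z| ≤ D := fun z hz => hmax hz
  have hslope : q.eval 0 - 1 / 3 ≤ D := by
    have h₁ := abs_le.mp (hk 1 le_rfl hn)
    have h₂ := abs_eval_sub_le_of_abs_derivative_le hD ⟨le_rfl, by positivity⟩ ⟨zero_le_one, hnR⟩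
    rw [Nat.cast_one] at h₁
    rw [sub_zero, abs_one, mul_one] at h₂
    linarith [neg_abs_le (q.eval 1 - q.eval 0)]
  have hbound : ∀ z ∈ Icc 0 (n : ℝ), |q.eval z| ≤ q.eval 0 + D / 2 := by
    refine fun z hz => abs_eval_le_of_abs_eval_natCast_le hD (fun k hkn => ?_) hz
    rcases Nat.eq_zero_or_pos k with rfl | hk1
    · simp [abs_of_pos (by linarith : 0 < q.eval 0)]
    · linarith [hk k hk1 hkn]
  have hmarkov := abs_derivative_eval_le_of_mem_Icc le_rfl hbound hξ (by positivity)
  rw [sub_zero, le_div_iff₀ (by positivity)] at hmarkov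
  have hβ : q.eval 0 ≤ 3 / 2 * D := by linarith
  have hD0 : 0 < D := by linarith
  refine le_of_mul_le_mul_right ?_ hD0
  calc (n : ℝ) * D ≤ 4 * q.natDegree ^ 2 * (q.eval 0 + D / 2) := by linarith
    _ ≤ 8 * q.natDegree ^ 2 * D := by nlinarith

namespace Chebyshev

theorem mul_sub_one_le_eval_T_succ_sub_eval_T {x : ℝ} (hx : 1 ≤ x) (d : ℕ) :
    (2 * d + 1) * (x - 1) ≤ (T ℝ (d + 1 : ℕ)).eval x - (T ℝ d).eval x := by
  induction d with
  | zero => simp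
  | succ d ih =>
    have hT : (T ℝ (d + 1 + 1 : ℕ)).eval x
        = 2 * x * (T ℝ (d + 1 : ℕ)).eval x - (T ℝ d).eval x := by
      rw [show ((d + 1 + 1 : ℕ) : ℤ) = (d : ℤ) + 2 by push_cast; ring, T_add_two]
      simp
    have h₁ := one_le_eval_T_real ((d + 1 : ℕ) : ℤ) hx
    rw [hT]
    push_cast at ih h₁ ⊢
    nlinarith [mul_nonneg (sub_nonneg.2 hx) (sub_nonneg.2 h₁)]

theorem one_add_sq_mul_sub_one_le_eval_T {x : ℝ} (hx : 1 ≤ x) (d : ℕ) :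
    1 + d ^ 2 * (x - 1) ≤ (T ℝ d).eval x := by
  induction d with
  | zero => simp
  | succ d ih =>
    have := mul_sub_one_le_eval_T_succ_sub_eval_T hx d
    push_cast at this ⊢
    nlinarith

theorem exists_one_le_eval_zero_abs_eval_natCast_le {n : ℕ} (hn : 1 ≤ n) :
    ∃ u : ℝ[X], 1 ≤ u.eval 0 ∧ (∀ k : ℕ, 1 ≤ k → k ≤ n → |u.eval (k : ℝ)| ≤ 1 / 3) ∧
      u.natDegree ≤ Nat.sqrt (2 * n) + 1 := by
  set d := Nat.sqrt (2 * n) + 1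
  have hnR : (0 : ℝ) < n := by exact_mod_cast hn
  -- `t ↦ (n + 1 - 2 t) / n` maps `[1, n]` into `[-1, 1]` and `0` to `1 + 1 / n`.
  refine ⟨Polynomial.C (1 / 3) *
    (T ℝ d).comp (Polynomial.C (-2 / n : ℝ) * X + Polynomial.C ((n + 1) / n : ℝ)),
    ?_, fun k hk hkn => ?_, ?_⟩
  · have hd : (2 * n : ℝ) ≤ d ^ 2 := by exact_mod_cast (Nat.lt_succ_sqrt' (2 * n)).le
    have hx : (1 : ℝ) ≤ (n + 1) / n := by rw [le_div_iff₀ hnR]; linarith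
    have := one_add_sq_mul_sub_one_le_eval_T hx d
    have h1n : ((n : ℝ) + 1) / n - 1 = 1 / n := by field_simp; ring
    simp only [eval_mul, eval_C, eval_comp, eval_add, eval_X, mul_zero, zero_add]
    rw [h1n, ← div_eq_mul_one_div] at this
    have : 2 ≤ (d : ℝ) ^ 2 / n := by rw [le_div_iff₀ hnR]; linarith
    linarith
  · have hk' : (1 : ℝ) ≤ k := by exact_mod_cast hk
    have hkn' : (k : ℝ) ≤ n := by exact_mod_cast hkn
    have harg : |(-2 / n * k + (n + 1) / n : ℝ)| ≤ 1 := by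
      rw [abs_le, show -2 / (n : ℝ) * k + (n + 1) / n = (n + 1 - 2 * k) / n by ring,
        le_div_iff₀ hnR, div_le_iff₀ hnR]
      constructor <;> linarith
    simp only [eval_mul, eval_C, eval_comp, eval_add, eval_X, abs_mul]
    rw [abs_of_pos (by norm_num : (0 : ℝ) < 1 / 3)]
    exact mul_le_of_le_one_right (by norm_num) (abs_eval_T_real_le_one _ harg)
  · refine (natDegree_C_mul_le _ _).trans ?_
    rw [natDegree_comp, natDegree_linear (by positivity), natDegree_T]
    simp

end Chebyshev

end Polynomial

section Lifting

variable {ι : Type*} [Fintype ι]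

theorem evalB_aeval_sum_X (u : Polynomial ℝ) (x : ι → Bool) :
    evalB (Polynomial.aeval (∑ i, X i : MvPolynomial ι ℝ) u) x = u.eval (wt x : ℝ) := by
  have hsum : MvPolynomial.eval (fun i => bval (x i)) (∑ i, X i : MvPolynomial ι ℝ) = wt x := by
    simp [bval, wt, Finset.sum_boole]
  calc evalB (Polynomial.aeval (∑ i, X i) u) x
      = aeval (fun i => bval (x i)) (Polynomial.aeval (∑ i, X i : MvPolynomial ι ℝ) u) := rfl
    _ = Polynomial.aeval (aeval (fun i => bval (x i)) (∑ i, X i : MvPolynomial ι ℝ)) u :=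
        (Polynomial.aeval_algHom_apply _ _ _).symm
    _ = u.eval (wt x : ℝ) := by rw [aeval_eq_eval, hsum, Polynomial.coe_aeval_eq_eval]

theorem totalDegree_aeval_sum_X_le (u : Polynomial ℝ) :
    (Polynomial.aeval (∑ i, X i : MvPolynomial ι ℝ) u).totalDegree ≤ u.natDegree := by
  have hS : (∑ i, X i : MvPolynomial ι ℝ).totalDegree ≤ 1 :=
    totalDegree_finsetSum_le fun i _ => (totalDegree_X i).le
  rw [Polynomial.aeval_eq_sum_range]
  refine totalDegree_finsetSum_le fun k hk => (totalDegree_smul_le _ _).trans ?_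
  calc _ ≤ k * (∑ i, X i : MvPolynomial ι ℝ).totalDegree := totalDegree_pow _ _
    _ ≤ k * 1 := Nat.mul_le_mul_left k hS
    _ ≤ u.natDegree := by rw [mul_one]; exact Nat.lt_succ_iff.mp (Finset.mem_range.mp hk)

end Lifting

theorem NOR_eq_true_iff {n : ℕ} (x : Fin n → Bool) : NOR n x = true ↔ wt x = 0 := by
  simp [NOR, wt, Finset.filter_eq_empty_iff]

theorem isApproxNdet_NOR_aeval_sum_X {n : ℕ} {u : Polynomial ℝ} (h₀ : 1 ≤ u.eval 0)
    (hk : ∀ k : ℕ, 1 ≤ k → k ≤ n → |u.eval (k : ℝ)| ≤ 1 / 3) :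
    IsApproxNdet (1 / 3) (NOR n) (Polynomial.aeval (∑ i, X i) u) := by
  intro x
  rw [evalB_aeval_sum_X]
  have hwt : wt x ≤ n := (Finset.card_filter_le _ _).trans_eq (Finset.card_fin n)
  refine ⟨fun h => hk _ (Nat.one_le_iff_ne_zero.mpr fun h0 => ?_) hwt, fun h => ?_⟩
  · simp [(NOR_eq_true_iff x).mpr h0] at h
  rw [(NOR_eq_true_iff x).mp h, Nat.cast_zero]
  exact h₀.trans (le_abs_self _)

theorem Nat.choose_mul_descFactorial {n k s : ℕ} (hsk : s ≤ k) :
    n.choose k * k.descFactorial s = n.descFactorial s * (n - s).choose (k - s) := by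
  rw [Nat.descFactorial_eq_factorial_mul_choose, Nat.descFactorial_eq_factorial_mul_choose,
    mul_left_comm, Nat.choose_mul hsk, mul_assoc]

section Symmetrization

open Finset

variable {ι : Type*} [DecidableEq ι]

theorem evalB_monomial_decide_mem (α : ι →₀ ℕ) (c : ℝ) (T : Finset ι) :
    evalB (monomial α c) (fun i => decide (i ∈ T)) = if α.support ⊆ T then c else 0 := by
  have hpow : ∀ i ∈ α.support, bval (decide (i ∈ T)) ^ α i = if i ∈ T then 1 else 0 := by
    intro i hi
    by_cases h : i ∈ T <;> simp [bval, h, Finsupp.mem_support_iff.mp hi]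
  rw [evalB, eval_monomial, Finsupp.prod, prod_congr rfl hpow, prod_boole]
  simp only [mul_ite, mul_one, mul_zero, ← subset_iff]

variable [Fintype ι]

theorem sum_powersetCard_evalB_monomial (α : ι →₀ ℕ) (c : ℝ) {k : ℕ}
    (hk : k ≤ Fintype.card ι) :
    ∑ T ∈ powersetCard k univ, evalB (monomial α c) (fun i => decide (i ∈ T)) =
      c / (Fintype.card ι).descFactorial #α.support * k.descFactorial #α.support *
        (Fintype.card ι).choose k := by
  simp only [evalB_monomial_decide_mem, sum_ite, sum_const_zero, add_zero, sum_const,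
    nsmul_eq_mul]
  rcases le_or_gt #α.support k with hsk | hks
  · have hn : (Fintype.card ι).descFactorial #α.support ≠ 0 :=
      (Nat.descFactorial_pos.mpr (hsk.trans hk)).ne'
    have key : ((Fintype.card ι).choose k * k.descFactorial #α.support : ℝ) =
        (Fintype.card ι).descFactorial #α.support *
          (Fintype.card ι - #α.support).choose (k - #α.support) := by
      exact_mod_cast Nat.choose_mul_descFactorial hsk
    rw [card_filter_powersetCard_subset _ _ _ (subset_univ _) hsk, card_univ]
    field_simp
    linear_combination (-c) * key
  · rw [Nat.descFactorial_eq_zero_iff_lt.mpr hks, filter_false_of_mem fun T hT hsub =>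
      (card_le_card hsub).trans_eq (mem_powersetCard.mp hT).2 |>.not_gt hks]
    simp

theorem exists_natDegree_le_eval_mul_choose_eq_sum (p : MvPolynomial ι ℝ) :
    ∃ q : Polynomial ℝ, q.natDegree ≤ p.totalDegree ∧ ∀ k ≤ Fintype.card ι,
      q.eval (k : ℝ) * (Fintype.card ι).choose k =
        ∑ T ∈ powersetCard k univ, evalB p (fun i => decide (i ∈ T)) := by
  refine ⟨∑ α ∈ p.support, Polynomial.C (coeff α p / (Fintype.card ι).descFactorial #α.support) *
    descPochhammer ℝ #α.support, ?_, fun k hk => ?_⟩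
  · refine Polynomial.natDegree_sum_le_of_forall_le _ _ fun α hα => ?_
    refine (Polynomial.natDegree_C_mul_le _ _).trans ?_
    rw [descPochhammer_natDegree]
    refine le_trans ?_ (le_totalDegree hα)
    rw [card_eq_sum_ones, Finsupp.sum]
    exact sum_le_sum fun i hi => Nat.one_le_iff_ne_zero.mpr (Finsupp.mem_support_iff.mp hi)
  · have hp : ∀ x : ι → Bool, evalB p x = ∑ α ∈ p.support, evalB (monomial α (coeff α p)) x :=
      fun x => by
        conv_lhs => rw [← support_sum_monomial_coeff p]
        exact map_sum (MvPolynomial.eval _) _ _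
    simp only [hp, Polynomial.eval_finsetSum, Polynomial.eval_mul, Polynomial.eval_C,
      descPochhammer_eval_eq_descFactorial, sum_mul]
    rw [sum_comm]
    exact sum_congr rfl fun α _ => (sum_powersetCard_evalB_monomial α _ hk).symm

end Symmetrization

theorem NOR_decide_mem {n : ℕ} (T : Finset (Fin n)) :
    NOR n (fun i => decide (i ∈ T)) = decide (T = ∅) := by
  simp [NOR, Finset.eq_empty_iff_forall_notMem]

theorem natCast_le_eight_mul_totalDegree_sq {n : ℕ} {p : MvPolynomial (Fin n) ℝ}
    (hp : IsApproxNdet (1 / 3) (NOR n) p) : (n : ℝ) ≤ 8 * p.totalDegree ^ 2 := by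
  obtain ⟨q, hqdeg, hq⟩ := exists_natDegree_le_eval_mul_choose_eq_sum p
  simp only [Fintype.card_fin] at hq
  have hq₀ : q.eval 0 = evalB p (fun _ => false) := by simpa using hq 0 n.zero_le
  have hqk : ∀ k : ℕ, 1 ≤ k → k ≤ n → |q.eval (k : ℝ)| ≤ 1 / 3 := by
    intro k hk hkn
    have hchoose : (0 : ℝ) < n.choose k := by exact_mod_cast Nat.choose_pos hkn
    have hsum : |q.eval (k : ℝ)| * n.choose k ≤ n.choose k * (1 / 3) := by
      rw [← abs_of_pos hchoose, ← abs_mul, hq k hkn, abs_of_pos hchoose]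
      refine (Finset.abs_sum_le_sum_abs _ _).trans ?_
      refine (Finset.sum_le_sum fun T hT => (hp _).1 ?_).trans_eq ?_
      · rw [NOR_decide_mem, decide_eq_false_iff_not, ← Finset.card_eq_zero,
          (Finset.mem_powersetCard.mp hT).2]
        omega
      · rw [Finset.sum_const, Finset.card_powersetCard, Finset.card_univ, Fintype.card_fin,
          nsmul_eq_mul]
    rw [mul_comm] at hsum
    exact le_of_mul_le_mul_left hsum hchoose
  have h₀ : 1 ≤ |q.eval 0| := hq₀ ▸ (hp _).2 (by simp [NOR])
  obtain ⟨r, hr₀, hrk, hrdeg⟩ : ∃ r : Polynomial ℝ, 1 ≤ r.eval 0 ∧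
      (∀ k : ℕ, 1 ≤ k → k ≤ n → |r.eval (k : ℝ)| ≤ 1 / 3) ∧ r.natDegree = q.natDegree := by
    rcases le_abs'.mp h₀ with h | h
    · exact ⟨-q, by simp; linarith, fun k hk hkn => by simpa using hqk k hk hkn,
        Polynomial.natDegree_neg q⟩
    · exact ⟨q, h, hqk, rfl⟩
  calc (n : ℝ) ≤ 8 * r.natDegree ^ 2 := Polynomial.natCast_le_eight_mul_natDegree_sq hr₀ hrk
    _ ≤ 8 * p.totalDegree ^ 2 := by rw [hrdeg]; gcongr

section approxNdeg

variable {ι : Type*} {ε : ℝ} {f : (ι → Bool) → Bool} {p : MvPolynomial ι ℝ}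

theorem approxNdeg_le_totalDegree (hp : IsApproxNdet ε f p) : approxNdeg ε f ≤ p.totalDegree :=
  Nat.sInf_le ⟨p, hp, le_rfl⟩

theorem exists_isApproxNdet_totalDegree_le_approxNdeg (hp : IsApproxNdet ε f p) :
    ∃ p' : MvPolynomial ι ℝ, IsApproxNdet ε f p' ∧ p'.totalDegree ≤ approxNdeg ε f :=
  Nat.sInf_mem (s := {d | ∃ p : MvPolynomial ι ℝ, IsApproxNdet ε f p ∧ p.totalDegree ≤ d})
    ⟨_, p, hp, le_rfl⟩

end approxNdeg

theorem N13_NOR_le_natDegree {n : ℕ} {u : Polynomial ℝ} (h₀ : 1 ≤ u.eval 0)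
    (hk : ∀ k : ℕ, 1 ≤ k → k ≤ n → |u.eval (k : ℝ)| ≤ 1 / 3) : N13 (NOR n) ≤ u.natDegree :=
  (approxNdeg_le_totalDegree (isApproxNdet_NOR_aeval_sum_X h₀ hk)).trans
    (totalDegree_aeval_sum_X_le u)

theorem sqrt_div_eight_le_N13_NOR (n : ℕ) : √((n : ℝ) / 8) ≤ N13 (NOR n) := by
  rcases Nat.eq_zero_or_pos n with rfl | hn
  · simp
  obtain ⟨u, h₀, hk, -⟩ := Polynomial.Chebyshev.exists_one_le_eval_zero_abs_eval_natCast_le hn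
  obtain ⟨p, hp, hdeg⟩ :=
    exists_isApproxNdet_totalDegree_le_approxNdeg (isApproxNdet_NOR_aeval_sum_X h₀ hk)
  rw [Real.sqrt_le_iff]
  refine ⟨by positivity, ?_⟩
  calc (n : ℝ) / 8 ≤ p.totalDegree ^ 2 := by linarith [natCast_le_eight_mul_totalDegree_sq hp]
    _ ≤ N13 (NOR n) ^ 2 := by gcongr; exact_mod_cast hdeg

theorem N13_NOR_le_three_mul_sqrt (n : ℕ) : (N13 (NOR n) : ℝ) ≤ 3 * √(n : ℝ) := by
  rcases Nat.eq_zero_or_pos n with rfl | hn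
  · have := N13_NOR_le_natDegree (n := 0) (u := 1) (by simp) (by omega)
    rw [Polynomial.natDegree_one, Nat.le_zero] at this
    simp [this]
  obtain ⟨u, h₀, hk, hdeg⟩ := Polynomial.Chebyshev.exists_one_le_eval_zero_abs_eval_natCast_le hn
  have h₁ : (1 : ℝ) ≤ √(n : ℝ) := Real.one_le_sqrt.mpr (by exact_mod_cast hn)
  have h₂ : (Nat.sqrt (2 * n) : ℝ) ≤ 2 * √(n : ℝ) := by
    refine Real.nat_sqrt_le_real_sqrt.trans ?_
    rw [Nat.cast_mul, Nat.cast_two, Real.sqrt_mul zero_le_two]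
    gcongr
    rw [Real.sqrt_le_iff]
    norm_num
  calc (N13 (NOR n) : ℝ) ≤ (Nat.sqrt (2 * n) + 1 : ℕ) := by
        exact_mod_cast (N13_NOR_le_natDegree h₀ hk).trans hdeg
    _ ≤ 3 * √(n : ℝ) := by push_cast; linarith

/-- `N(NOR_n) ≥ √(n/8)` and `N(NOR_n) = Θ(√n)`. -/
theorem stmt4 :
    (∀ n : ℕ, Real.sqrt ((n : ℝ) / 8) ≤ (N13 (NOR n) : ℝ)) ∧
    ∃ c C : ℝ, 0 < c ∧ 0 < C ∧ ∀ n : ℕ,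
      c * Real.sqrt (n : ℝ) ≤ (N13 (NOR n) : ℝ) ∧
      (N13 (NOR n) : ℝ) ≤ C * Real.sqrt (n : ℝ) := by
  refine ⟨sqrt_div_eight_le_N13_NOR, √(1 / 8), 3, by positivity, by norm_num, fun n => ⟨?_, ?_⟩⟩
  · rw [← Real.sqrt_mul (by norm_num), one_div_mul_eq_div]
    exact sqrt_div_eight_le_N13_NOR n
  · exact N13_NOR_le_three_mul_sqrt n
end
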